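/- arXiv:math/0506042 — 4 statements merged into one kernel-verified Lean document; each statement's English description precedes it below -/
import Mathlib

section
/- Let h be an orientation-preserving homeomorphism of the plane whose unique fixed point is 0, and suppose every closed curve of degree 1 in ℝ² ∖ {0} has h-length at least some d ≥ 2 (i.e. the module of h is d ≥ 2). If γ is any curve in ℝ² ∖ {0} that can be written as a concatenation of at most three arcs each disjoint from its image under h, and γ is a closed curve of nonzero degree around 0, then d ≤ 3. Contrapositive: if the module of h is at least 4, then no closed curve of nonzero degree around 0 can be decomposed into three or fewer h-free arcs. -/
open Set

/-- A curve `γ` (defined on `[0,1]`) with values in `ℂ ∖ {0}` has degree `n` around `0`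
if it lifts through the covering `exp : ℂ → ℂ ∖ {0}` to a path whose endpoints differ
by `2πin`. -/
def HasDeg (γ : ℝ → ℂ) (n : ℤ) : Prop :=
  ∃ g : ℝ → ℂ, ContinuousOn g (Icc 0 1) ∧
    (∀ t ∈ Icc (0:ℝ) 1, γ t = Complex.exp (g t)) ∧
    g 1 - g 0 = ((2 * Real.pi * (n : ℝ) : ℝ) : ℂ) * Complex.I

/-- A loop in `ℝ² ∖ {0}`: a continuous closed curve on `[0,1]` avoiding the origin. -/
def IsLoopIn (γ : ℝ → ℂ) : Prop :=
  ContinuousOn γ (Icc 0 1) ∧ γ 0 = γ 1 ∧ ∀ t ∈ Icc (0:ℝ) 1, γ t ≠ 0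

/-- A decomposition of the closed curve `γ` into `l` subarcs, each of which is free for
`h` (disjoint from its image under `h`). The `h`-length of `γ` is the least such `l`. -/
def Decomp (h : ℂ → ℂ) (γ : ℝ → ℂ) (l : ℕ) : Prop :=
  ∃ t : ℕ → ℝ, t 0 = 0 ∧ t l = 1 ∧ (∀ i < l, t i ≤ t (i + 1)) ∧
    ∀ i < l, ∀ s ∈ Icc (t i) (t (i + 1)), ∀ s' ∈ Icc (t i) (t (i + 1)),
      h (γ s) ≠ γ s'

/-- Orientation preservation, encoded (via Kneser's theorem) as being isotopic to the
identity through bijections of the plane. -/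
def IsotopicToId (h : ℂ → ℂ) : Prop :=
  ∃ F : ℝ → ℂ → ℂ, Continuous (Function.uncurry F) ∧ F 0 = id ∧ F 1 = h ∧
    ∀ t : ℝ, Function.Bijective (F t)

/-! Lifting `γ` through `exp` gives `g` with `g 1 - g 0 = 2πin`. Take a shortest parameter
interval `[a, b]` over which `g` increases by a nonzero multiple `2πik` of `2πi`. Every such
integer chord inside `[a, b]` is then `±2πik`, so if `|k| ≥ 2` the loop `exp (g / k)` on
`[a, b]`, which winds once around `0`, is disjoint from its rotation by `exp (2πi / k)`. That is
impossible: `0` could then be joined to a far point without meeting the loop (radially out to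
the rotated loop, along it, and radially outwards again), and homotopy lifting through `exp`
would make the winding number `0`. So `γ` restricted to `[a, b]` (reversed if `k = -1`) is a
closed curve of degree `1`, and restricting a decomposition of `γ` into three free arcs gives
one of it. -/

open Complex
open scoped Real

lemma sub_eq_sub_of_exp_eq {A : Type*} [TopologicalSpace A] [PreconnectedSpace A] {f g : A → ℂ}
    (hf : Continuous f) (hg : Continuous g) (h : ∀ a, exp (f a) = exp (g a)) (a a' : A) :
    f a - g a = f a' - g a' :=
  isCoveringMap_exp.const_of_comp (hf.sub hg) (fun a a' => by ext; simp [exp_sub, h]) a a'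

lemma lift_eq_of_joinedIn_compl_range {L : unitInterval → ℂ} (hL : Continuous L)
    (hloop : exp (L 1) = exp (L 0)) {w : ℂ} (hw : ∀ x, ‖exp (L x)‖ < ‖w‖)
    (hjoin : JoinedIn (range fun x => exp (L x))ᶜ 0 w) : L 1 = L 0 := by
  set c := hjoin.somePath
  have hc : ∀ u x, exp (L x) - c u ≠ 0 := fun u x h =>
    hjoin.somePath_mem u ⟨x, sub_eq_zero.mp h⟩
  let H : C(unitInterval × unitInterval, {z : ℂ // z ≠ 0}) :=
    ⟨fun q => ⟨exp (L q.2) - c q.1, hc _ _⟩, by fun_prop⟩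
  set Θ := isCoveringMap_exp.liftHomotopy H ⟨L, hL⟩ (fun x => by ext; simp [H])
  have hΘ (u x : unitInterval) : exp (Θ (u, x)) = exp (L x) - c u :=
    congrArg Subtype.val (congrFun (isCoveringMap_exp.liftHomotopy_lifts H _ _) (u, x))
  have hΘ₀ (x : unitInterval) : Θ (0, x) = L x := isCoveringMap_exp.liftHomotopy_zero H _ _ x
  -- the winding of `exp ∘ L` around `c u` does not depend on `u`
  have hwind := sub_eq_sub_of_exp_eq (f := fun u => Θ (u, 1)) (g := fun u => Θ (u, 0))
    (by fun_prop) (by fun_prop) (fun u => by simp only [hΘ, hloop]) 0 1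
  -- around the far point `w = c 1` there is an explicit lift
  have hslit (x : unitInterval) : 1 - exp (L x) / w ∈ slitPlane := by
    have : ‖-(exp (L x) / w)‖ < 1 := by
      rw [norm_neg, norm_div, div_lt_one ((norm_nonneg _).trans_lt (hw x))]
      exact hw x
    simpa [sub_eq_add_neg] using mem_slitPlane_of_norm_lt_one this
  have hw0 : w ≠ 0 := norm_pos_iff.mp ((norm_nonneg _).trans_lt (hw 0))
  set Λ : unitInterval → ℂ := fun x => log (-w) + log (1 - exp (L x) / w)
  have hΛ : Continuous Λ := continuous_const.add (Continuous.clog (by fun_prop) hslit)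
  have hfar := sub_eq_sub_of_exp_eq (f := fun x => Θ (1, x)) (g := Λ) (by fun_prop) hΛ
    (fun x => by
      rw [hΘ, exp_add, exp_log (neg_ne_zero.mpr hw0), exp_log (slitPlane_ne_zero (hslit x))]
      rw [c.target]
      field_simp
      ring) 1 0
  simp only [Λ, hΘ₀, hloop] at hwind hfar
  linear_combination hwind + hfar

lemma lift_eq_of_disjoint_rotate {L : unitInterval → ℂ} (hL : Continuous L)
    (hloop : exp (L 1) = exp (L 0)) {ζ : ℂ} (hζ : ‖ζ‖ = 1)
    (hdisj : ∀ x y, ζ * exp (L x) ≠ exp (L y)) : L 1 = L 0 := by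
  set ℓ : unitInterval → ℂ := fun x => exp (L x)
  have hℓ : Continuous ℓ := by fun_prop
  obtain ⟨x₁, -, hx₁⟩ := isCompact_univ.exists_isMinOn univ_nonempty
    (continuous_norm.comp hℓ).continuousOn
  obtain ⟨x₂, -, hx₂⟩ := isCompact_univ.exists_isMaxOn univ_nonempty
    (continuous_norm.comp hℓ).continuousOn
  have hmin (x : unitInterval) : ‖ℓ x₁‖ ≤ ‖ℓ x‖ := hx₁ (mem_univ x)
  have hmax (x : unitInterval) : ‖ℓ x‖ ≤ ‖ℓ x₂‖ := hx₂ (mem_univ x)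
  have hpos : 0 < ‖ℓ x₁‖ := norm_pos_iff.mpr (exp_ne_zero _)
  have hrot (x : unitInterval) : ζ * ℓ x ∉ range ℓ := fun ⟨y, hy⟩ => hdisj x y hy.symm
  -- inward: `0` and `ζ ℓ x₁` are joined through the disc of radius `min ‖ℓ‖`
  have hin : JoinedIn (range ℓ)ᶜ 0 (ζ * ℓ x₁) := by
    refine JoinedIn.ofLine (f := fun θ : ℝ => θ * (ζ * ℓ x₁)) (by fun_prop) (by simp) (by simp) ?_
    rintro _ ⟨θ, hθ, rfl⟩ ⟨x, hx⟩
    rcases hθ.2.lt_or_eq with hθ1 | rfl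
    · have : ‖ℓ x‖ < ‖ℓ x₁‖ := by
        rw [hx, norm_mul, norm_mul, hζ, norm_real, Real.norm_of_nonneg hθ.1]
        nlinarith
      exact (hmin x).not_gt this
    · exact hrot x₁ ⟨x, by simpa using hx⟩
  have halong : JoinedIn (range ℓ)ᶜ (ζ * ℓ x₁) (ζ * ℓ x₂) :=
    haveI : PathConnectedSpace unitInterval := isPathConnected_iff_pathConnectedSpace.mp
      ((convex_Icc (0 : ℝ) 1).isPathConnected ⟨0, left_mem_Icc.mpr zero_le_one⟩)
    ((isPathConnected_range (continuous_const.mul hℓ)).joinedIn _ ⟨x₁, rfl⟩ _ ⟨x₂, rfl⟩).mono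
      (range_subset_iff.mpr hrot)
  -- outward: `ζ ℓ x₂` and `2 ζ ℓ x₂` are joined outside the disc of radius `max ‖ℓ‖`
  have hout : JoinedIn (range ℓ)ᶜ (ζ * ℓ x₂) (2 * (ζ * ℓ x₂)) := by
    refine JoinedIn.ofLine (f := fun θ : ℝ => (1 + θ) * (ζ * ℓ x₂)) (by fun_prop) (by simp)
      (by norm_num) ?_
    rintro _ ⟨θ, hθ, rfl⟩ ⟨x, hx⟩
    rcases hθ.1.lt_or_eq with hθ0 | rfl
    · have : ‖ℓ x₂‖ < ‖ℓ x‖ := by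
        rw [hx, norm_mul, norm_mul, hζ, ← ofReal_one, ← ofReal_add, norm_real,
          Real.norm_of_nonneg (by linarith [hθ.1])]
        nlinarith [hmax x₁]
      exact (hmax x).not_gt this
    · exact hrot x₂ ⟨x, by simpa using hx⟩
  refine lift_eq_of_joinedIn_compl_range hL hloop (fun x => ?_) (hin.trans (halong.trans hout))
  rw [norm_mul, norm_mul, hζ, one_mul, RCLike.norm_ofNat]
  linarith [hmax x, hmin x]

lemma exists_int_ne_zero_eq_mul_two_pi_I_iff {z : ℂ} :
    (∃ k : ℤ, k ≠ 0 ∧ z = k * (2 * π * I)) ↔ exp z = 1 ∧ 1 ≤ ‖z‖ := by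
  constructor
  · rintro ⟨k, hk, rfl⟩
    refine ⟨exp_int_mul_two_pi_mul_I k, ?_⟩
    have : (1 : ℝ) ≤ |(k : ℝ)| := by exact_mod_cast Int.one_le_abs hk
    rw [norm_mul, norm_intCast, norm_mul, norm_mul, norm_real, Real.norm_of_nonneg Real.pi_pos.le,
      norm_I, RCLike.norm_ofNat]
    nlinarith [Real.pi_gt_three]
  · rintro ⟨h1, h2⟩
    obtain ⟨k, rfl⟩ := exp_eq_one_iff.mp h1
    refine ⟨k, fun hk => ?_, rfl⟩
    simp [hk] at h2
    linarith

lemma exists_minimal_int_chord {g : ℝ → ℂ} {s t : ℝ} (hst : s ≤ t)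
    (hg : ContinuousOn g (Icc s t)) {n : ℤ} (hn : n ≠ 0) (h : g t - g s = n * (2 * π * I)) :
    ∃ a b, s ≤ a ∧ a ≤ b ∧ b ≤ t ∧ ∃ k : ℤ, k ≠ 0 ∧ g b - g a = k * (2 * π * I) ∧
      ∀ x ∈ Icc a b, ∀ y ∈ Icc a b, ∀ m : ℤ, g y - g x = m * (2 * π * I) → k ∣ m := by
  set D := Icc s t ×ˢ Icc s t
  set T : Set (ℝ × ℝ) := D ∩ (fun q => g q.2 - g q.1) ⁻¹' {z | exp z = 1 ∧ 1 ≤ ‖z‖} ∩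
    {q | q.1 ≤ q.2}
  have hmemT {x y : ℝ} (hx : x ∈ Icc s t) (hy : y ∈ Icc s t) (hxy : x ≤ y) {m : ℤ}
      (hm : m ≠ 0) (hxy' : g y - g x = m * (2 * π * I)) : (x, y) ∈ T :=
    ⟨⟨⟨hx, hy⟩, exists_int_ne_zero_eq_mul_two_pi_I_iff.mp ⟨m, hm, hxy'⟩⟩, hxy⟩
  have hT : IsCompact T := by
    have hcont : ContinuousOn (fun q : ℝ × ℝ => g q.2 - g q.1) D :=
      (hg.comp continuousOn_snd fun q hq => hq.2).sub (hg.comp continuousOn_fst fun q hq => hq.1)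
    refine (isCompact_Icc.prod isCompact_Icc).of_isClosed_subset ?_ fun q hq => hq.1.1
    exact (hcont.preimage_isClosed_of_isClosed (isClosed_Icc.prod isClosed_Icc)
      ((isClosed_eq Complex.continuous_exp continuous_const).inter
        (isClosed_le continuous_const continuous_norm))).inter
      (isClosed_le continuous_fst continuous_snd)
  obtain ⟨⟨a, b⟩, ⟨⟨⟨ha, hb⟩, hab'⟩, hab⟩, hmin⟩ := hT.exists_isMinOn
    ⟨_, hmemT (left_mem_Icc.mpr hst) (right_mem_Icc.mpr hst) hst hn h⟩
    (continuous_snd.sub continuous_fst).continuousOn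
  obtain ⟨k, hk, hgab⟩ := exists_int_ne_zero_eq_mul_two_pi_I_iff.mpr hab'
  have hsub : Icc a b ⊆ Icc s t := Icc_subset_Icc ha.1 hb.2
  -- a nonzero integer chord inside `[a, b]` cannot be shorter, so it is `[a, b]` itself
  have hfull {x y : ℝ} (hx : x ∈ Icc a b) (hy : y ∈ Icc a b) (hxy : x ≤ y) {m : ℤ}
      (hm : m ≠ 0) (hxy' : g y - g x = m * (2 * π * I)) : m = k := by
    have : b - a ≤ y - x := hmin (hmemT (hsub hx) (hsub hy) hxy hm hxy')
    obtain ⟨rfl, rfl⟩ : x = a ∧ y = b := ⟨by linarith [hx.1, hy.2], by linarith [hx.1, hy.2]⟩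
    exact_mod_cast mul_right_cancel₀ two_pi_I_ne_zero (hxy'.symm.trans hgab)
  refine ⟨a, b, ha.1, hab, hb.2, k, hk, hgab, fun x hx y hy m hxy' => ?_⟩
  rcases eq_or_ne m 0 with rfl | hm
  · exact dvd_zero k
  rcases le_total x y with hxy | hyx
  · exact (hfull hx hy hxy hm hxy').symm ▸ dvd_refl k
  · have := hfull hy hx hyx (neg_ne_zero.mpr hm) (by push_cast; linear_combination -hxy')
    exact (dvd_neg.mp (this ▸ dvd_refl k))

lemma isUnit_of_forall_int_chord_dvd {g : ℝ → ℂ} {a b : ℝ} (hab : a ≤ b)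
    (hg : ContinuousOn g (Icc a b)) {k : ℤ} (hk : k ≠ 0) (hgab : g b - g a = k * (2 * π * I))
    (hdvd : ∀ x ∈ Icc a b, ∀ y ∈ Icc a b, ∀ m : ℤ, g y - g x = m * (2 * π * I) → k ∣ m) :
    IsUnit k := by
  have hkC : (k : ℂ) ≠ 0 := Int.cast_ne_zero.mpr hk
  set φ : unitInterval → ℝ := fun x => a + x * (b - a)
  have hφ (x : unitInterval) : φ x ∈ Icc a b :=
    ⟨by nlinarith [x.2.1], by nlinarith [x.2.2]⟩
  set L : unitInterval → ℂ := fun x => g (φ x) / k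
  have hL : Continuous L := (hg.comp_continuous (by fun_prop) hφ).div_const _
  have hL10 : L 1 - L 0 = 2 * π * I := by
    simp only [L, φ, Set.Icc.coe_one, Set.Icc.coe_zero]
    rw [← sub_div, one_mul, zero_mul, add_zero, add_sub_cancel, hgab, mul_div_cancel_left₀ _ hkC]
  have hloop : exp (L 1) = exp (L 0) := by
    rw [show L 1 = L 0 + 2 * π * I by linear_combination hL10, Complex.exp_add,
      exp_two_pi_mul_I, mul_one]
  have hζ : ‖exp (2 * π * I / k)‖ = 1 := by
    rw [show 2 * π * I / k = ((2 * π / k : ℝ) : ℂ) * I by push_cast; ring]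
    exact norm_exp_ofReal_mul_I _
  by_contra hunit
  -- a meeting point of `exp ∘ L` and its rotation by `exp (2πi / k)` is an integer chord
  -- `1 - jk` of `g`, which `k` does not divide
  have hdisj (x y : unitInterval) : exp (2 * π * I / k) * exp (L x) ≠ exp (L y) := by
    intro hxy
    obtain ⟨j, hj⟩ := exp_eq_exp_iff_exists_int.mp (Complex.exp_add _ _ ▸ hxy)
    refine hunit (isUnit_of_dvd_one ((Int.dvd_add_right (dvd_mul_left k (-j))).mp
      (hdvd _ (hφ x) _ (hφ y) (-j * k + 1) ?_)))
    simp only [L] at hj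
    field_simp at hj
    push_cast
    linear_combination -hj
  exact two_pi_I_ne_zero (by rw [← hL10, lift_eq_of_disjoint_rotate hL hloop hζ hdisj, sub_self])

lemma exists_unit_int_chord {g : ℝ → ℂ} {s t : ℝ} (hst : s ≤ t)
    (hg : ContinuousOn g (Icc s t)) {n : ℤ} (hn : n ≠ 0) (h : g t - g s = n * (2 * π * I)) :
    ∃ a b, s ≤ a ∧ a < b ∧ b ≤ t ∧ ∃ k : ℤ, IsUnit k ∧ g b - g a = k * (2 * π * I) := by
  obtain ⟨a, b, hsa, hab, hbt, k, hk, hgab, hdvd⟩ := exists_minimal_int_chord hst hg hn h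
  refine ⟨a, b, hsa, hab.lt_of_ne ?_, hbt, k,
    isUnit_of_forall_int_chord_dvd hab (hg.mono (Icc_subset_Icc hsa hbt)) hk hgab hdvd, hgab⟩
  rintro rfl
  simp [hk] at hgab

lemma hasDeg_iff {γ : ℝ → ℂ} {n : ℤ} : HasDeg γ n ↔ ∃ g : ℝ → ℂ, ContinuousOn g (Icc 0 1) ∧
    (∀ t ∈ Icc (0:ℝ) 1, γ t = exp (g t)) ∧ g 1 - g 0 = n * (2 * π * I) := by
  have : ((2 * π * (n : ℝ) : ℝ) : ℂ) * I = n * (2 * π * I) := by push_cast; ring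
  simp only [HasDeg, this]

lemma HasDeg.isLoopIn {γ : ℝ → ℂ} {n : ℤ} (hγ : HasDeg γ n) : IsLoopIn γ := by
  obtain ⟨g, hg, hγg, hg10⟩ := hasDeg_iff.mp hγ
  refine ⟨(Complex.continuous_exp.comp_continuousOn hg).congr hγg, ?_,
    fun t ht => hγg t ht ▸ exp_ne_zero _⟩
  rw [hγg 0 (left_mem_Icc.mpr zero_le_one), hγg 1 (right_mem_Icc.mpr zero_le_one),
    show g 1 = g 0 + n * (2 * π * I) by linear_combination hg10, Complex.exp_add,
    exp_int_mul_two_pi_mul_I, mul_one]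

lemma HasDeg.comp_one_sub {γ : ℝ → ℂ} {n : ℤ} (hγ : HasDeg γ n) :
    HasDeg (fun u => γ (1 - u)) (-n) := by
  obtain ⟨g, hg, hγg, hg10⟩ := hasDeg_iff.mp hγ
  have hmaps : MapsTo (fun u : ℝ => 1 - u) (Icc 0 1) (Icc 0 1) :=
    fun u hu => ⟨by linarith [hu.2], by linarith [hu.1]⟩
  refine hasDeg_iff.mpr ⟨fun u => g (1 - u), hg.comp (by fun_prop) hmaps,
    fun u hu => hγg _ (hmaps hu), ?_⟩
  simp only [sub_zero, sub_self, Int.cast_neg]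
  linear_combination -hg10

lemma HasDeg.comp_affine {γ g : ℝ → ℂ} (hg : ContinuousOn g (Icc 0 1))
    (hγg : ∀ t ∈ Icc (0:ℝ) 1, γ t = exp (g t)) {a b : ℝ} (ha : 0 ≤ a) (hab : a ≤ b) (hb : b ≤ 1)
    {k : ℤ} (hgab : g b - g a = k * (2 * π * I)) : HasDeg (fun u => γ (a + u * (b - a))) k := by
  have hmaps : MapsTo (fun u : ℝ => a + u * (b - a)) (Icc 0 1) (Icc 0 1) :=
    fun u hu => ⟨by nlinarith [hu.1], by nlinarith [hu.2]⟩
  refine hasDeg_iff.mpr ⟨fun u => g (a + u * (b - a)), hg.comp (by fun_prop) hmaps,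
    fun u hu => hγg _ (hmaps hu), ?_⟩
  simpa using hgab

lemma Decomp.apply_ne_self {h : ℂ → ℂ} {γ : ℝ → ℂ} {l : ℕ} (hd : Decomp h γ l) {s : ℝ}
    (hs : s ∈ Icc (0:ℝ) 1) : h (γ s) ≠ γ s := by
  obtain ⟨t, ht0, htl, -, hfree⟩ := hd
  have hl : l ≠ 0 := by rintro rfl; linarith [ht0 ▸ htl]
  have hlast : s ≤ t (l - 1 + 1) := by
    rw [Nat.sub_add_cancel (Nat.pos_of_ne_zero hl), htl]
    exact hs.2
  have hex : ∃ i, s ≤ t (i + 1) := ⟨_, hlast⟩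
  set i := Nat.find hex
  have hil : i < l := by
    have := Nat.find_min' hex hlast
    omega
  have hti : t i ≤ s := by
    rcases hi : i with _ | j
    · rw [ht0]; exact hs.1
    · have := Nat.find_min hex (show j < i by omega)
      exact (not_le.mp this).le
  exact hfree i hil s ⟨hti, Nat.find_spec hex⟩ s ⟨hti, Nat.find_spec hex⟩

lemma Decomp.comp_one_sub {h : ℂ → ℂ} {γ : ℝ → ℂ} {l : ℕ} (hd : Decomp h γ l) :
    Decomp h (fun u => γ (1 - u)) l := by
  obtain ⟨t, ht0, htl, hmono, hfree⟩ := hd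
  refine ⟨fun i => 1 - t (l - i), by simp [htl], by simp [ht0], fun i hi => ?_,
    fun i hi s hs s' hs' => ?_⟩
  all_goals have he : l - i = l - (i + 1) + 1 := by omega
  · simp only [he]
    linarith [hmono (l - (i + 1)) (by omega)]
  · simp only [he, mem_Icc] at hs hs'
    exact hfree (l - (i + 1)) (by omega) _ ⟨by linarith, by linarith⟩ _ ⟨by linarith, by linarith⟩

lemma Decomp.comp_affine {h : ℂ → ℂ} {γ : ℝ → ℂ} {l : ℕ} (hd : Decomp h γ l) {a b : ℝ}
    (ha : 0 ≤ a) (hab : a < b) (hb : b ≤ 1) : Decomp h (fun u => γ (a + u * (b - a))) l := by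
  obtain ⟨t, ht0, htl, hmono, hfree⟩ := id hd
  have hba : 0 < b - a := sub_pos.mpr hab
  set cl : ℝ → ℝ := fun x => max a (min b x)
  have hcl_mono : Monotone cl := fun x y hxy => max_le_max le_rfl (min_le_min le_rfl hxy)
  have hcl_mem (x : ℝ) : cl x ∈ Icc (0:ℝ) 1 :=
    ⟨ha.trans (le_max_left _ _), max_le (hab.le.trans hb) ((min_le_left _ _).trans hb)⟩
  -- clamping to `[a, b]` only shrinks a piece, unless it collapses it to a point
  have hcl_sub {x y : ℝ} (hlt : cl x < cl y) : x ≤ cl x ∧ cl y ≤ y := by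
    simp only [cl, max_def, min_def] at hlt ⊢
    constructor <;> split_ifs at hlt ⊢ <;> linarith
  have hpiece {i : ℕ} {u : ℝ}
      (hu : u ∈ Icc ((cl (t i) - a) / (b - a)) ((cl (t (i + 1)) - a) / (b - a))) :
      a + u * (b - a) ∈ Icc (cl (t i)) (cl (t (i + 1))) := by
    obtain ⟨h1, h2⟩ := hu
    rw [div_le_iff₀ hba] at h1
    rw [le_div_iff₀ hba] at h2
    constructor <;> linarith
  refine ⟨fun i => (cl (t i) - a) / (b - a), ?_, ?_, fun i hi => ?_, fun i hi s hs s' hs' => ?_⟩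
  · simp [cl, ht0, ha]
  · simp [cl, htl, hb, hab.le, hba.ne']
  · dsimp only
    gcongr
    exact hcl_mono (hmono i hi)
  · rcases (hcl_mono (hmono i hi)).lt_or_eq with hlt | heq
    · obtain ⟨h1, h2⟩ := hcl_sub hlt
      exact hfree i hi _ ⟨h1.trans (hpiece hs).1, (hpiece hs).2.trans h2⟩
        _ ⟨h1.trans (hpiece hs').1, (hpiece hs').2.trans h2⟩
    · have e (u : ℝ) (hu : _) : a + u * (b - a) = cl (t i) :=
        le_antisymm (heq ▸ (hpiece hu).2) (hpiece hu).1
      simp only [e s hs, e s' hs']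
      exact hd.apply_ne_self (hcl_mem _)

lemma HasDeg.exists_hasDeg_one_decomp {h : ℂ → ℂ} {γ : ℝ → ℂ} {n : ℤ} {l : ℕ}
    (hγ : HasDeg γ n) (hn : n ≠ 0) (hd : Decomp h γ l) : ∃ δ, HasDeg δ 1 ∧ Decomp h δ l := by
  obtain ⟨g, hg, hγg, hg10⟩ := hasDeg_iff.mp hγ
  obtain ⟨a, b, ha, hab, hb, k, hk, hgab⟩ := exists_unit_int_chord zero_le_one hg hn hg10
  have hδ := HasDeg.comp_affine hg hγg ha hab.le hb hgab
  have hδd := hd.comp_affine ha hab hb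
  rcases Int.isUnit_iff.mp hk with rfl | rfl
  · exact ⟨_, hδ, hδd⟩
  · exact ⟨_, by simpa using hδ.comp_one_sub, hδd.comp_one_sub⟩

theorem stmt5_general (h : ℂ ≃ₜ ℂ) (d : ℕ)
    (hmod : ∀ γ : ℝ → ℂ, IsLoopIn γ → HasDeg γ 1 → ∀ l : ℕ, Decomp (⇑h) γ l → d ≤ l)
    (γ : ℝ → ℂ) (n : ℤ) (hdeg : HasDeg γ n) (hn : n ≠ 0)
    (hfree : Decomp (⇑h) γ 3) :
    d ≤ 3 := by
  obtain ⟨δ, hδ, hδd⟩ := hdeg.exists_hasDeg_one_decomp hn hfree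
  exact hmod δ hδ.isLoopIn hδ 3 hδd

/-- Let `h` be an orientation-preserving homeomorphism of the plane with unique fixed
point `0`, whose module is `d ≥ 2` (every closed curve of degree `1` around `0` has
`h`-length at least `d`). If some closed curve of nonzero degree around `0` can be
written as a concatenation of at most three `h`-free arcs, then `d ≤ 3`. -/
theorem stmt5 (h : ℂ ≃ₜ ℂ) (hor : IsotopicToId ⇑h)
    (hfix : ∀ x : ℂ, h x = x ↔ x = 0)
    (d : ℕ) (hd : 2 ≤ d)
    (hmod : ∀ γ : ℝ → ℂ, IsLoopIn γ → HasDeg γ 1 → ∀ l : ℕ, Decomp (⇑h) γ l → d ≤ l)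
    (γ : ℝ → ℂ) (n : ℤ) (hγ : IsLoopIn γ) (hdeg : HasDeg γ n) (hn : n ≠ 0)
    (hfree : Decomp (⇑h) γ 3) :
    d ≤ 3 :=
  stmt5_general h d hmod γ n hdeg hn hfree
end

section
/- Let F and G be two disjoint closed connected subsets of the plane. Then the set O(F,G) := O_F(G) ∩ O_G(F) — where O_A(B) denotes the connected component of the complement of B containing A — is the unique connected component of ℝ² ∖ (F ∪ G) whose closure meets both F and G. -/
/-!
`O_F(G)` and `O_G(F)` are open and connected, and they cover the plane: the closure of a
component of `(F ∪ G)ᶜ` meets `F` or `G`, and the component then lies in `O_F(G)` or `O_G(F)`.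
The plane is unicoherent (Alexander's lemma): two connected open sets covering it have a connected
intersection, because a separation `A ⊔ B` of `U ∩ V` would produce a circle-valued map (a loop
from `U ∖ V` through `A` to `V ∖ U` and back through `B` winds once around) with no continuous
logarithm, which is impossible on a simply connected space. Hence `O(F,G)` is a connected open
subset of `(F ∪ G)ᶜ` containing every component whose closure meets both `F` and `G`, so it is
that component. Finally, `O(F,G)` is closed in the connected set `O_F(G)` away from `F`, so its
closure must reach `F`, and symmetrically `G`.
-/

open Set

section

variable {X : Type*} [TopologicalSpace X]

theorem exists_continuous_circleExp_lift [SimplyConnectedSpace X] [LocallyPathConnectedSpace X]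
    (f : C(X, Circle)) : ∃ g : C(X, ℝ), ∀ x, Circle.exp (g x) = f x := by
  obtain ⟨x₀⟩ := (inferInstance : Nonempty X)
  obtain ⟨e₀, he₀⟩ := Circle.exp_surjective (f x₀)
  obtain ⟨g, ⟨-, hg⟩, -⟩ :=
    Circle.isCoveringMap_exp.existsUnique_continuousMap_lifts f x₀ e₀ he₀
  exact ⟨g, congrFun hg⟩

theorem IsPreconnected.sub_eq_of_circleExp_eq {S : Set X} (hS : IsPreconnected S) {u v : X → ℝ}
    (hu : ContinuousOn u S) (hv : ContinuousOn v S)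
    (huv : ∀ x ∈ S, Circle.exp (u x) = Circle.exp (v x)) {x y : X} (hx : x ∈ S) (hy : y ∈ S) :
    u x - v x = u y - v y := by
  have hT : IsDiscrete (AddSubgroup.zmultiples (2 * Real.pi) : Set ℝ) :=
    isDiscrete_iff_discreteTopology.mpr
      (inferInstanceAs (DiscreteTopology (AddSubgroup.zmultiples (2 * Real.pi))))
  refine hS.constant_of_mapsTo hT (hu.sub hv) (fun z hz => ?_) hx hy
  obtain ⟨m, hm⟩ := Circle.exp_eq_exp.mp (huv z hz)
  exact AddSubgroup.mem_zmultiples_iff.mpr ⟨m, by simp [hm, zsmul_eq_mul]⟩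

open Real in
theorem IsPreconnected.inter_subset_of_disjoint_frontier [NormalSpace X] [SimplyConnectedSpace X]
    [LocallyPathConnectedSpace X] {U V B : Set X} (hU : IsPreconnected U) (hV : IsPreconnected V)
    (hUo : IsOpen U) (hVo : IsOpen V) (hUV : U ∪ V = univ) (hBUV : B ⊆ U ∩ V)
    (hfrontier : Disjoint (frontier B) (U ∩ V)) (hB : B.Nonempty) : U ∩ V ⊆ B := by
  classical
  intro p hpUV
  by_contra hpB
  obtain ⟨q, hqB⟩ := hB
  obtain ⟨φ, hφV, hφU, -⟩ := exists_continuous_zero_one_of_isClosed hVo.isClosed_compl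
    hUo.isClosed_compl (disjoint_compl_left_iff_subset.mpr (compl_subset_iff_union.mpr hUV))
  -- `θ c` jumps only across `frontier B ⊆ Uᶜ ∪ Vᶜ`, by `c` on `Vᶜ` and by `c - 2π` on `Uᶜ`;
  -- so `θ 0` is continuous on `U`, `θ (2π)` on `V`, and `Circle.exp ∘ θ 0` everywhere.
  let θ : ℝ → X → ℝ := fun c x => if x ∈ B then c - π * φ x else π * φ x
  have hθU : ContinuousOn (θ 0) U := by
    refine ContinuousOn.if (fun x hx => ?_) (by fun_prop) (by fun_prop)
    simp [hφV fun hxV => hfrontier.notMem_of_mem_left hx.2 ⟨hx.1, hxV⟩]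
  have hθV : ContinuousOn (θ (2 * π)) V := by
    refine ContinuousOn.if (fun x hx => ?_) (by fun_prop) (by fun_prop)
    simp only [hφU fun hxU => hfrontier.notMem_of_mem_left hx.2 ⟨hxU, hx.1⟩, Pi.one_apply]
    ring
  have hθexp : ∀ x, Circle.exp (θ (2 * π) x) = Circle.exp (θ 0 x) := by
    intro x
    by_cases hx : x ∈ B <;> simp [θ, hx, sub_eq_add_neg (2 * π)]
  have hf : Continuous fun x => Circle.exp (θ 0 x) := by
    simp only [θ, apply_ite Circle.exp]
    refine Continuous.if (fun x hx => ?_) (by fun_prop) (by fun_prop)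
    rcases not_and_or.mp (hfrontier.notMem_of_mem_left hx) with hxU | hxV
    · simp only [hφU hxU, Pi.one_apply]
      exact Circle.exp_eq_exp.mpr ⟨-1, by ring⟩
    · simp [hφV hxV]
  obtain ⟨g, hg⟩ := exists_continuous_circleExp_lift ⟨_, hf⟩
  have hpqU := hU.sub_eq_of_circleExp_eq g.continuous.continuousOn hθU (fun x _ => hg x)
    hpUV.1 (hBUV hqB).1
  have hpqV := hV.sub_eq_of_circleExp_eq g.continuous.continuousOn hθV
    (fun x _ => (hg x).trans (hθexp x).symm) hpUV.2 (hBUV hqB).2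
  simp only [θ, hpB, hqB, if_true, if_false] at hpqU hpqV
  linarith [pi_pos]

theorem IsPreconnected.inter_of_isOpen_of_union_eq_univ [NormalSpace X] [SimplyConnectedSpace X]
    [LocallyPathConnectedSpace X] {U V : Set X} (hU : IsPreconnected U) (hV : IsPreconnected V)
    (hUo : IsOpen U) (hVo : IsOpen V) (hUV : U ∪ V = univ) : IsPreconnected (U ∩ V) := by
  intro s t hs ht hst ⟨p, hpUV, hps⟩ ⟨q, hqUV, hqt⟩
  by_contra hdisj
  have hBo : IsOpen (U ∩ V ∩ t) := (hUo.inter hVo).inter ht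
  have hfrontier : Disjoint (frontier (U ∩ V ∩ t)) (U ∩ V) := by
    refine disjoint_left.mpr fun x hx hxUV => ?_
    rw [hBo.frontier_eq] at hx
    have hxs : x ∈ s := (hst hxUV).resolve_right fun hxt => hx.2 ⟨hxUV, hxt⟩
    obtain ⟨y, hys, hyB⟩ := mem_closure_iff.mp hx.1 s hs hxs
    exact hdisj ⟨y, hyB.1, hys, hyB.2⟩
  have hpt := (hU.inter_subset_of_disjoint_frontier hV hUo hVo hUV inter_subset_left hfrontier
    ⟨q, hqUV, hqt⟩ hpUV).2
  exact hdisj ⟨p, hpUV, hps, hpt⟩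

theorem IsOpen.closure_connectedComponentIn_subset [LocallyConnectedSpace X] {s : Set X}
    (hs : IsOpen s) (x : X) :
    closure (connectedComponentIn s x) ⊆ connectedComponentIn s x ∪ sᶜ := by
  intro z hz
  by_cases hzs : z ∈ s
  · obtain ⟨y, hyz, hyx⟩ := mem_closure_iff.mp hz _ hs.connectedComponentIn
      (mem_connectedComponentIn hzs)
    left
    rw [connectedComponentIn_eq hyx, ← connectedComponentIn_eq hyz]
    exact mem_connectedComponentIn hzs
  · exact Or.inr hzs

theorem IsPreconnected.union_of_closure_inter_nonempty {s t : Set X} (hs : IsPreconnected s)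
    (ht : IsPreconnected t) (h : (closure s ∩ t).Nonempty) : IsPreconnected (s ∪ t) := by
  obtain ⟨y, hys, hyt⟩ := h
  have := (hs.subset_closure (subset_insert y s) (insert_subset hys subset_closure)).union y
    (mem_insert y s) hyt ht
  rwa [insert_union, insert_eq_of_mem (mem_union_right s hyt)] at this

theorem connectedComponentIn_inter_eq_of_mem {s t : Set X} {a b x : X}
    (h : IsPreconnected (connectedComponentIn s a ∩ connectedComponentIn t b))
    (hx : x ∈ connectedComponentIn s a ∩ connectedComponentIn t b) :
    connectedComponentIn (s ∩ t) x = connectedComponentIn s a ∩ connectedComponentIn t b := by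
  have hxs := connectedComponentIn_subset s a hx.1
  have hxt := connectedComponentIn_subset t b hx.2
  rw [connectedComponentIn_eq hx.1, connectedComponentIn_eq hx.2] at h ⊢
  exact (subset_inter (connectedComponentIn_mono x inter_subset_left)
    (connectedComponentIn_mono x inter_subset_right)).antisymm <|
    h.subset_connectedComponentIn ⟨mem_connectedComponentIn hxs, mem_connectedComponentIn hxt⟩
      (inter_subset_inter (connectedComponentIn_subset s x) (connectedComponentIn_subset t x))

theorem closure_connectedComponentIn_compl_inter_nonempty [PreconnectedSpace X]
    [LocallyConnectedSpace X] {F : Set X} (hF : IsClosed F) (hFne : F.Nonempty) {x : X}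
    (hx : x ∉ F) : (closure (connectedComponentIn Fᶜ x) ∩ F).Nonempty := by
  by_contra h
  have huniv : univ ⊆ connectedComponentIn Fᶜ x :=
    isPreconnected_univ.subset_of_closure_inter_subset hF.isOpen_compl.connectedComponentIn
      ⟨x, trivial, mem_connectedComponentIn hx⟩ fun z ⟨hz, _⟩ =>
        (hF.isOpen_compl.closure_connectedComponentIn_subset x hz).resolve_right
          fun hzF => h ⟨z, hz, not_not.mp hzF⟩
  obtain ⟨w, hw⟩ := hFne
  exact connectedComponentIn_subset _ _ (huniv trivial) hw

theorem connectedComponentIn_compl_union_subset_left {F G : Set X} (hF : IsPreconnected F)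
    (hFG : Disjoint F G) {a x : X} (ha : a ∈ F)
    (hx : (closure (connectedComponentIn (F ∪ G)ᶜ x) ∩ F).Nonempty) :
    connectedComponentIn (F ∪ G)ᶜ x ⊆ connectedComponentIn Gᶜ a :=
  subset_union_left.trans <|
    (isPreconnected_connectedComponentIn.union_of_closure_inter_nonempty hF hx
      ).subset_connectedComponentIn (mem_union_right _ ha) <| union_subset
        ((connectedComponentIn_subset _ _).trans (compl_subset_compl.mpr subset_union_right))
        hFG.subset_compl_right

theorem connectedComponentIn_compl_union_subset_right {F G : Set X} (hG : IsPreconnected G)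
    (hFG : Disjoint F G) {b x : X} (hb : b ∈ G)
    (hx : (closure (connectedComponentIn (F ∪ G)ᶜ x) ∩ G).Nonempty) :
    connectedComponentIn (F ∪ G)ᶜ x ⊆ connectedComponentIn Fᶜ b := by
  rw [union_comm] at hx ⊢
  exact connectedComponentIn_compl_union_subset_left hG hFG.symm hb hx

theorem connectedComponentIn_compl_union_connectedComponentIn_compl_eq_univ [PreconnectedSpace X]
    [LocallyConnectedSpace X] {F G : Set X} (hFc : IsClosed F) (hGc : IsClosed G)
    (hF : IsPreconnected F) (hG : IsPreconnected G) (hFG : Disjoint F G) {a b : X}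
    (ha : a ∈ F) (hb : b ∈ G) : connectedComponentIn Gᶜ a ∪ connectedComponentIn Fᶜ b = univ := by
  refine eq_univ_of_forall fun x => ?_
  by_cases hx : x ∈ F ∪ G
  · exact hx.imp (fun hxF => hF.subset_connectedComponentIn ha hFG.subset_compl_right hxF)
      (fun hxG => hG.subset_connectedComponentIn hb hFG.subset_compl_left hxG)
  obtain ⟨y, hy, hyF | hyG⟩ :=
    closure_connectedComponentIn_compl_inter_nonempty (hFc.union hGc) ⟨a, .inl ha⟩ hx
  · exact .inl (connectedComponentIn_compl_union_subset_left hF hFG ha ⟨y, hy, hyF⟩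
      (mem_connectedComponentIn hx))
  · exact .inr (connectedComponentIn_compl_union_subset_right hG hFG hb ⟨y, hy, hyG⟩
      (mem_connectedComponentIn hx))

theorem closure_connectedComponentIn_inter_connectedComponentIn_inter_nonempty
    [LocallyConnectedSpace X] {F G : Set X} (hFc : IsClosed F) (hGc : IsClosed G) {a b : X}
    (ha : a ∈ F) (hFa : F ⊆ connectedComponentIn Gᶜ a)
    (hne : (connectedComponentIn Gᶜ a ∩ connectedComponentIn Fᶜ b).Nonempty) :
    (closure (connectedComponentIn Gᶜ a ∩ connectedComponentIn Fᶜ b) ∩ F).Nonempty := by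
  by_contra h
  have hsub : connectedComponentIn Gᶜ a ⊆ connectedComponentIn Gᶜ a ∩ connectedComponentIn Fᶜ b :=
    isPreconnected_connectedComponentIn.subset_of_closure_inter_subset
      (hGc.isOpen_compl.connectedComponentIn.inter hFc.isOpen_compl.connectedComponentIn)
      (by rwa [← inter_assoc, inter_self]) fun z ⟨hz, hza⟩ =>
        ⟨hza, (hFc.isOpen_compl.closure_connectedComponentIn_subset b
          (closure_mono inter_subset_right hz)).resolve_right fun hzF => h ⟨z, hz, not_not.mp hzF⟩⟩
  exact connectedComponentIn_subset _ _ (hsub (hFa ha)).2 ha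

end

/-- Let `F` and `G` be disjoint closed connected subsets of the plane, with `a ∈ F` and
`b ∈ G`. Then `O(F,G) := O_F(G) ∩ O_G(F)` (intersection of the component of `Gᶜ`
containing `F` and the component of `Fᶜ` containing `G`) is the unique connected
component of `ℝ² ∖ (F ∪ G)` whose closure meets both `F` and `G`. -/
theorem stmt15 (F G : Set ℂ) (hFc : IsClosed F) (hGc : IsClosed G)
    (hF : IsConnected F) (hG : IsConnected G) (hFG : Disjoint F G)
    (a : ℂ) (ha : a ∈ F) (b : ℂ) (hb : b ∈ G) :
    (∃ x ∈ (F ∪ G)ᶜ, connectedComponentIn Gᶜ a ∩ connectedComponentIn Fᶜ b =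
      connectedComponentIn (F ∪ G)ᶜ x) ∧
    (closure (connectedComponentIn Gᶜ a ∩ connectedComponentIn Fᶜ b) ∩ F).Nonempty ∧
    (closure (connectedComponentIn Gᶜ a ∩ connectedComponentIn Fᶜ b) ∩ G).Nonempty ∧
    (∀ x ∈ (F ∪ G)ᶜ,
      (closure (connectedComponentIn (F ∪ G)ᶜ x) ∩ F).Nonempty →
      (closure (connectedComponentIn (F ∪ G)ᶜ x) ∩ G).Nonempty →
      connectedComponentIn (F ∪ G)ᶜ x =
        connectedComponentIn Gᶜ a ∩ connectedComponentIn Fᶜ b) := by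
  set CA := connectedComponentIn Gᶜ a
  set CB := connectedComponentIn Fᶜ b
  have hFA : F ⊆ CA := hF.isPreconnected.subset_connectedComponentIn ha hFG.subset_compl_right
  have hGB : G ⊆ CB := hG.isPreconnected.subset_connectedComponentIn hb hFG.subset_compl_left
  have hCAo : IsOpen CA := hGc.isOpen_compl.connectedComponentIn
  have hCBo : IsOpen CB := hFc.isOpen_compl.connectedComponentIn
  have hcover : CA ∪ CB = univ :=
    connectedComponentIn_compl_union_connectedComponentIn_compl_eq_univ hFc hGc
      hF.isPreconnected hG.isPreconnected hFG ha hb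
  obtain ⟨x₀, hx₀⟩ := nonempty_inter hCAo hCBo hcover ⟨a, hFA ha⟩ ⟨b, hGB hb⟩
  have hpre : IsPreconnected (CA ∩ CB) :=
    isPreconnected_connectedComponentIn.inter_of_isOpen_of_union_eq_univ
      isPreconnected_connectedComponentIn hCAo hCBo hcover
  have key : ∀ x ∈ CA ∩ CB, connectedComponentIn (F ∪ G)ᶜ x = CA ∩ CB := fun x hx => by
    rw [compl_union, inter_comm]
    exact connectedComponentIn_inter_eq_of_mem hpre hx
  refine ⟨⟨x₀, ?_, (key x₀ hx₀).symm⟩, ?_, ?_, fun x hx hxF hxG => key x ⟨?_, ?_⟩⟩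
  · rw [compl_union]
    exact ⟨connectedComponentIn_subset _ _ hx₀.2, connectedComponentIn_subset _ _ hx₀.1⟩
  · exact closure_connectedComponentIn_inter_connectedComponentIn_inter_nonempty hFc hGc ha hFA
      ⟨x₀, hx₀⟩
  · rw [inter_comm CA CB]
    exact closure_connectedComponentIn_inter_connectedComponentIn_inter_nonempty hGc hFc hb hGB
      ⟨x₀, hx₀.symm⟩
  · exact connectedComponentIn_compl_union_subset_left hF.isPreconnected hFG ha hxF
      (mem_connectedComponentIn hx)
  · exact connectedComponentIn_compl_union_subset_right hG.isPreconnected hFG hb hxG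
      (mem_connectedComponentIn hx)
end

section
/- Let A, B, C be pairwise disjoint connected subsets of the plane, and suppose B separates A and C (i.e. the components O_A(B) and O_C(B) of ℝ² ∖ B containing A and C respectively are distinct). Then A does not separate B and C: the components O_B(A) and O_C(A) of ℝ² ∖ A coincide. -/
open Set

/-- If `B` is a connected set in the plane and `V` is the connected component of `Bᶜ`
containing `c`, and `V ≠ univ`, then `V ∪ B` is connected. -/
lemma comp_union_connected {B : Set ℂ} (hB : IsConnected B) {c : ℂ} (hc : c ∈ Bᶜ)
    (hne : connectedComponentIn Bᶜ c ≠ univ) :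
    IsConnected (connectedComponentIn Bᶜ c ∪ B) := by
  set V := connectedComponentIn Bᶜ c with hV
  have hVc : c ∈ V := mem_connectedComponentIn hc
  have hVpre : IsPreconnected V := isPreconnected_connectedComponentIn
  have hVsub : V ⊆ Bᶜ := connectedComponentIn_subset _ _
  have hne' : (V ∪ B).Nonempty := ⟨c, Or.inl hVc⟩
  by_cases h1 : (closure V ∩ B).Nonempty
  · -- closure of V meets B
    obtain ⟨p, hpV, hpB⟩ := h1
    have h2 : IsPreconnected (insert p V) :=
      hVpre.subset_closure (subset_insert _ _)
        (insert_subset hpV subset_closure)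
    have : V ∪ B = insert p V ∪ B := by
      rw [insert_eq]
      rw [union_comm {p} V, union_assoc]
      congr 1
      simp [hpB]
    rw [this]
    exact ⟨hne'.mono (by rw [this]),
      h2.union p (mem_insert _ _) hpB hB.isPreconnected⟩
  by_cases h2 : (V ∩ closure B).Nonempty
  · obtain ⟨p, hpV, hpB⟩ := h2
    have h3 : IsPreconnected (insert p B) :=
      hB.isPreconnected.subset_closure (subset_insert _ _)
        (insert_subset hpB subset_closure)
    have : V ∪ B = V ∪ insert p B := by
      rw [insert_eq, ← union_assoc]
      congr 1
      simp [hpV]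
    rw [this]
    exact ⟨⟨c, Or.inl hVc⟩, hVpre.union p hpV (mem_insert _ _) h3⟩
  -- both closures miss: V is clopen, contradiction
  exfalso
  push_neg at h1 h2
  -- V is closed
  have hVclosed : closure V ⊆ V := by
    intro x hx
    have hxB : x ∈ Bᶜ := fun hxB =>
      eq_empty_iff_forall_notMem.mp h1 x ⟨hx, hxB⟩
    have hins : IsPreconnected (insert x V) :=
      hVpre.subset_closure (subset_insert _ _) (insert_subset hx subset_closure)
    have : insert x V ⊆ V :=
      hins.subset_connectedComponentIn (mem_insert_iff.mpr (Or.inr hVc))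
        (insert_subset hxB hVsub)
    exact this (mem_insert _ _)
  have hVclosed' : IsClosed V := closure_subset_iff_isClosed.mp hVclosed
  -- V is contained in the open set (closure B)ᶜ
  have hVsub2 : V ⊆ (closure B)ᶜ := fun x hx hxcl =>
    eq_empty_iff_forall_notMem.mp h2 x ⟨hx, hxcl⟩
  -- the component of c in (closure B)ᶜ is open and contained in V
  have hopen : IsOpen (connectedComponentIn (closure B)ᶜ c) :=
    (isClosed_closure.isOpen_compl).connectedComponentIn
  have hsub3 : V ⊆ connectedComponentIn (closure B)ᶜ c :=
    hVpre.subset_connectedComponentIn hVc hVsub2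
  have hsub4 : connectedComponentIn (closure B)ᶜ c ⊆ V :=
    isPreconnected_connectedComponentIn.subset_connectedComponentIn
      (mem_connectedComponentIn (hVsub2 hVc))
      ((connectedComponentIn_subset _ _).trans (compl_subset_compl.mpr subset_closure))
  have hVopen : IsOpen V := by
    rw [Subset.antisymm hsub4 hsub3] at hopen
    exact hopen
  exact hne (IsClopen.eq_univ ⟨hVclosed', hVopen⟩ ⟨c, hVc⟩)

/-- Antisymmetry of separation: if `A`, `B`, `C` are pairwise disjoint connected
subsets of the plane and `B` separates `A` and `C` (the components of `Bᶜ` containing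
`A` and `C` are distinct), then `A` does not separate `B` and `C`: the components of
`Aᶜ` containing `B` and `C` coincide. -/
theorem stmt16 (A B C : Set ℂ)
    (hA : IsConnected A) (hB : IsConnected B) (hC : IsConnected C)
    (hAB : Disjoint A B) (hAC : Disjoint A C) (hBC : Disjoint B C)
    (a : ℂ) (ha : a ∈ A) (b : ℂ) (hb : b ∈ B) (c : ℂ) (hc : c ∈ C)
    (hsep : connectedComponentIn Bᶜ a ≠ connectedComponentIn Bᶜ c) :
    connectedComponentIn Aᶜ b = connectedComponentIn Aᶜ c := by
  set U := connectedComponentIn Bᶜ a with hU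
  set V := connectedComponentIn Bᶜ c with hV
  have hcB : c ∈ Bᶜ := fun h => (hBC.ne_of_mem h hc) rfl
  have haB : a ∈ Bᶜ := fun h => (hAB.ne_of_mem ha h) rfl
  have hAU : A ⊆ U :=
    hA.isPreconnected.subset_connectedComponentIn ha
      (fun x hx hxB => (hAB.ne_of_mem hx hxB) rfl)
  -- A ∩ V = ∅
  have hAV : ∀ x ∈ A, x ∉ V := by
    intro x hx hxV
    exact hsep ((connectedComponentIn_eq (hAU hx)).trans
      (connectedComponentIn_eq hxV).symm)
  -- V ≠ univ since b ∈ B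
  have hVne : V ≠ univ := by
    intro h
    have hbV : b ∈ V := by rw [h]; exact mem_univ b
    exact (connectedComponentIn_subset Bᶜ c) hbV hb
  have hconn : IsConnected (V ∪ B) := comp_union_connected hB hcB hVne
  have hsubA : V ∪ B ⊆ Aᶜ := by
    rintro x (hx | hx)
    · exact fun hxA => hAV x hxA hx
    · exact fun hxA => (hAB.ne_of_mem hxA hx) rfl
  have hbmem : b ∈ V ∪ B := Or.inr hb
  have hcmem : c ∈ V ∪ B := Or.inl (mem_connectedComponentIn hcB)
  have : V ∪ B ⊆ connectedComponentIn Aᶜ b :=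
    hconn.isPreconnected.subset_connectedComponentIn hbmem hsubA
  exact (connectedComponentIn_eq (this hcmem))
end

section
/- Let A, B, C, D be pairwise disjoint connected subsets of the plane. If B separates A and C, and C separates B and D, then B separates A and D, and C separates A and D. -/
open Set

/-- `Separates A B C` means that `B` separates `A` and `C`: the connected components of
`Bᶜ` containing points of `A` and points of `C` are distinct. -/
def Separates (A B C : Set ℂ) : Prop :=
  ∀ a ∈ A, ∀ c ∈ C, connectedComponentIn Bᶜ a ≠ connectedComponentIn Bᶜ c

/-- For a connected nonempty `B ⊆ ℂ` and a point `x ∉ B`, the union of the connected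
component of `x` in `Bᶜ` with `B` is preconnected. -/
lemma aux_union (B : Set ℂ) (hB : IsConnected B) {x : ℂ} (hx : x ∈ Bᶜ) :
    IsPreconnected (connectedComponentIn Bᶜ x ∪ B) := by
  set U := connectedComponentIn Bᶜ x with hUdef
  have hxU : x ∈ U := mem_connectedComponentIn hx
  have hUB : U ⊆ Bᶜ := connectedComponentIn_subset _ _
  have hUpre : IsPreconnected U := isPreconnected_connectedComponentIn
  -- points of the closure of `U` that avoid `B` are still in `U`
  have hclBc : ∀ y ∈ closure U, y ∈ Bᶜ → y ∈ U := by
    intro y hy hyB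
    have h1 : IsPreconnected (insert y U) :=
      hUpre.subset_closure (subset_insert _ _) (insert_subset hy subset_closure)
    have h2 : insert y U ⊆ Bᶜ := insert_subset hyB hUB
    have h3 : insert y U ⊆ connectedComponentIn Bᶜ x :=
      h1.subset_connectedComponentIn (mem_insert_of_mem _ hxU) h2
    exact h3 (mem_insert _ _)
  -- key : `U` touches `B`
  have key : (closure U ∩ B).Nonempty ∨ (U ∩ closure B).Nonempty := by
    by_contra h
    push_neg at h
    obtain ⟨h1, h2⟩ := h
    have hclosed : IsClosed U := by
      rw [← closure_eq_iff_isClosed]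
      refine subset_antisymm ?_ subset_closure
      intro y hy
      by_cases hyB : y ∈ B
      · exact absurd (show y ∈ closure U ∩ B from ⟨hy, hyB⟩) (by simp [h1])
      · exact hclBc y hy hyB
    have hopen : IsOpen U := by
      rw [Metric.isOpen_iff]
      intro y hy
      have hyB : y ∉ closure B := fun hc =>
        absurd (show y ∈ U ∩ closure B from ⟨hy, hc⟩) (by simp [h2])
      obtain ⟨ε, hε, hball⟩ := Metric.isOpen_iff.mp isClosed_closure.isOpen_compl y hyB
      refine ⟨ε, hε, ?_⟩
      have hpre : IsPreconnected (Metric.ball y ε ∪ U) :=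
        IsPreconnected.union y (Metric.mem_ball_self hε) hy
          (convex_ball y ε).isPreconnected hUpre
      have hsub : Metric.ball y ε ∪ U ⊆ Bᶜ := by
        refine union_subset ?_ hUB
        intro z hz hzB
        exact hball hz (subset_closure hzB)
      have := hpre.subset_connectedComponentIn (Or.inr hxU) hsub
      exact fun z hz => this (Or.inl hz)
    have hUuniv : U = univ := IsClopen.eq_univ ⟨hclosed, hopen⟩ ⟨x, hxU⟩
    obtain ⟨b, hb⟩ := hB.nonempty
    exact hUB (hUuniv ▸ mem_univ b) hb
  rcases key with ⟨p, hpU, hpB⟩ | ⟨p, hpU, hpB⟩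
  · have h1 : IsPreconnected (insert p U) :=
      hUpre.subset_closure (subset_insert _ _) (insert_subset hpU subset_closure)
    have := IsPreconnected.union p (mem_insert _ _) hpB h1 hB.isPreconnected
    rwa [insert_union, Set.insert_eq_of_mem (show p ∈ U ∪ B from Or.inr hpB)] at this
  · have h1 : IsPreconnected (insert p B) :=
      hB.isPreconnected.subset_closure (subset_insert _ _) (insert_subset hpB subset_closure)
    have := IsPreconnected.union p hpU (mem_insert _ _) hUpre h1
    rwa [union_insert, Set.insert_eq_of_mem (show p ∈ U ∪ B from Or.inl hpU)] at this

/-- If `B` separates `A` and `C`, then `A` and `B` lie in the same component of `Cᶜ`. -/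
lemma sep_flip (A B C : Set ℂ) (hB : IsConnected B)
    (hAB : Disjoint A B) (hBC : Disjoint B C)
    (h : Separates A B C) :
    ∀ a ∈ A, ∀ b ∈ B, connectedComponentIn Cᶜ a = connectedComponentIn Cᶜ b := by
  intro a ha b hb
  have haB : a ∈ Bᶜ := fun h' => (disjoint_left.mp hAB) ha h'
  set U := connectedComponentIn Bᶜ a with hUdef
  have hUC : ∀ y ∈ U, y ∉ C := by
    intro y hyU hyC
    exact h a ha y hyC (connectedComponentIn_eq hyU)
  have hconn := aux_union B hB haB
  have hsub : U ∪ B ⊆ Cᶜ := by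
    refine union_subset (fun y hy => hUC y hy) ?_
    intro y hy
    exact fun hc => (disjoint_left.mp hBC) hy hc
  have hsub2 : U ∪ B ⊆ connectedComponentIn Cᶜ a :=
    hconn.subset_connectedComponentIn (Or.inl (mem_connectedComponentIn haB)) hsub
  exact connectedComponentIn_eq (hsub2 (Or.inr hb))

/-- Transitivity of separation: if `A`, `B`, `C`, `D` are pairwise disjoint connected
subsets of the plane, `B` separates `A` and `C`, and `C` separates `B` and `D`, then
`B` separates `A` and `D`, and `C` separates `A` and `D`. -/
theorem stmt17 (A B C D : Set ℂ)
    (hA : IsConnected A) (hB : IsConnected B) (hC : IsConnected C) (hD : IsConnected D)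
    (hAB : Disjoint A B) (hAC : Disjoint A C) (hAD : Disjoint A D)
    (hBC : Disjoint B C) (hBD : Disjoint B D) (hCD : Disjoint C D)
    (h1 : Separates A B C) (h2 : Separates B C D) :
    Separates A B D ∧ Separates A C D := by
  obtain ⟨b0, hb0⟩ := hB.nonempty
  obtain ⟨c0, hc0⟩ := hC.nonempty
  have h2' : Separates D C B := fun d hd b hb => (h2 b hb d hd).symm
  have key1 := sep_flip A B C hB hAB hBC h1
  have key2 := sep_flip D C B hC hCD.symm hBC.symm h2'
  constructor
  · intro a ha d hd
    have := key2 d hd c0 hc0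
    rw [this]
    exact h1 a ha c0 hc0
  · intro a ha d hd
    rw [key1 a ha b0 hb0]
    exact h2 b0 hb0 d hd
end
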